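/- arXiv:2203.12650 — 5 statements merged into one kernel-verified Lean document; each statement's English description precedes it below -/
import Mathlib

section
/- For any matrix M in SL(2,ℂ) and any vector v in ℂ², the maximum of ‖M⁻¹v‖, ‖Mv‖, and ‖M²v‖ is at least ‖v‖/2. -/
/-!
Cayley–Hamilton for `M ∈ SL(2,ℂ)` with `t = Tr M` gives `M⁻¹v + Mv = t v` and `M²v + v = t Mv`.
If `‖t‖ ≥ 1` the first identity yields `‖v‖ ≤ ‖M⁻¹v‖ + ‖Mv‖`; if `‖t‖ ≤ 1` the second yields
`‖v‖ ≤ ‖Mv‖ + ‖M²v‖`. Either way one of the three norms is at least `‖v‖/2`.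
-/

/-- The Euclidean norm of a vector in ℂ². -/
noncomputable def vnorm (v : Fin 2 → ℂ) : ℝ := ‖(WithLp.equiv 2 (Fin 2 → ℂ)).symm v‖

open Matrix

namespace Matrix

variable {R : Type*} [CommRing R]

theorem mul_self_add_det_smul_one_fin_two (M : Matrix (Fin 2) (Fin 2) R) :
    M * M + M.det • (1 : Matrix (Fin 2) (Fin 2) R) = M.trace • M := by
  nontriviality R
  have h := M.aeval_self_charpoly
  rw [charpoly_fin_two] at h
  simp only [map_add, map_sub, map_mul, Polynomial.aeval_X, Polynomial.aeval_C,
    Algebra.algebraMap_eq_smul_one, smul_mul_assoc, one_mul, sq] at h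
  rw [← sub_eq_zero, ← h]
  abel

theorem inv_eq_trace_smul_one_sub_of_det_eq_one {M : Matrix (Fin 2) (Fin 2) R} (hM : M.det = 1) :
    M⁻¹ = M.trace • (1 : Matrix (Fin 2) (Fin 2) R) - M := by
  apply inv_eq_right_inv
  have h := M.mul_self_add_det_smul_one_fin_two
  rw [hM, one_smul] at h
  rw [mul_sub, mul_smul_comm, mul_one, ← h]
  abel

end Matrix

theorem half_norm_le_max_of_add_eq_smul {𝕜 E : Type*} [NormedField 𝕜] [SeminormedAddCommGroup E]
    [NormedSpace 𝕜 E] {a b c x : E} {t : 𝕜} (hab : a + b = t • x) (hcx : c + x = t • b) :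
    ‖x‖ / 2 ≤ max (max ‖a‖ ‖b‖) ‖c‖ := by
  have ha := le_max_left ‖a‖ ‖b‖
  have hb := le_max_right ‖a‖ ‖b‖
  have hab_c := le_max_left (max ‖a‖ ‖b‖) ‖c‖
  have hc := le_max_right (max ‖a‖ ‖b‖) ‖c‖
  rcases le_total ‖t‖ 1 with ht | ht
  · have : ‖x‖ ≤ ‖b‖ + ‖c‖ :=
      calc ‖x‖ = ‖t • b - c‖ := by rw [← hcx, add_sub_cancel_left]
        _ ≤ ‖t • b‖ + ‖c‖ := norm_sub_le _ _
        _ ≤ ‖b‖ + ‖c‖ := by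
          rw [norm_smul]; gcongr; exact mul_le_of_le_one_left (norm_nonneg _) ht
    linarith
  · have : ‖x‖ ≤ ‖a‖ + ‖b‖ :=
      calc ‖x‖ ≤ ‖t • x‖ := by rw [norm_smul]; exact le_mul_of_one_le_left (norm_nonneg _) ht
        _ = ‖a + b‖ := by rw [hab]
        _ ≤ ‖a‖ + ‖b‖ := norm_add_le _ _
    linarith

/-- For any `M ∈ SL(2,ℂ)` and `v ∈ ℂ²`,
`max (‖M⁻¹v‖, ‖Mv‖, ‖M²v‖) ≥ ‖v‖/2`. -/
theorem sl2_three_block_gordon (M : Matrix (Fin 2) (Fin 2) ℂ) (hM : M.det = 1)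
    (v : Fin 2 → ℂ) :
    vnorm v / 2 ≤
      max (max (vnorm (M⁻¹.mulVec v)) (vnorm (M.mulVec v))) (vnorm ((M * M).mulVec v)) := by
  have hinv : M⁻¹ *ᵥ v + M *ᵥ v = M.trace • v := by
    rw [← add_mulVec, inv_eq_trace_smul_one_sub_of_det_eq_one hM, sub_add_cancel, smul_mulVec,
      one_mulVec]
  have hsq : (M * M) *ᵥ v + v = M.trace • (M *ᵥ v) := by
    rw [← smul_mulVec, ← mul_self_add_det_smul_one_fin_two, hM, one_smul, add_mulVec, one_mulVec]
  simp only [vnorm, WithLp.equiv_symm_apply]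
  exact half_norm_le_max_of_add_eq_smul
    (by rw [← WithLp.toLp_add, hinv, WithLp.toLp_smul])
    (by rw [← WithLp.toLp_add, hsq, WithLp.toLp_smul])
end

section
/- For any matrix M in SL(2,ℂ) and any vector v in ℂ², the maximum of ‖Mv‖ and ‖M²v‖ is at least (1/2)·min(1, 1/|Tr M|)·‖v‖. -/
theorem Matrix.mul_self_eq_trace_smul_sub_one_of_det_eq_one {R : Type*} [CommRing R]
    [Nontrivial R] {M : Matrix (Fin 2) (Fin 2) R} (hM : M.det = 1) :
    M * M = M.trace • M - 1 := by
  have h := M.aeval_self_charpoly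
  rw [Matrix.charpoly_fin_two, hM] at h
  simp only [map_add, map_sub, map_mul, map_pow, Polynomial.aeval_X, Polynomial.aeval_C,
    map_one, Algebra.algebraMap_eq_smul_one, smul_mul_assoc, one_mul] at h
  rw [← sub_eq_zero, ← h, sq]
  abel

theorem norm_le_add_one_mul_max_of_eq_smul_sub {𝕜 E : Type*} [NormedField 𝕜]
    [SeminormedAddCommGroup E] [NormedSpace 𝕜 E] {x y z : E} (t : 𝕜) (h : z = t • y - x) :
    ‖x‖ ≤ (‖t‖ + 1) * max ‖y‖ ‖z‖ :=
  calc ‖x‖ = ‖t • y - z‖ := by rw [h, sub_sub_cancel]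
    _ ≤ ‖t‖ * ‖y‖ + ‖z‖ := by rw [← norm_smul]; exact norm_sub_le _ _
    _ ≤ ‖t‖ * max ‖y‖ ‖z‖ + max ‖y‖ ‖z‖ := by gcongr <;> simp
    _ = (‖t‖ + 1) * max ‖y‖ ‖z‖ := by ring

theorem min_one_inv_mul_add_one_le_two {T : ℝ} (hT : 0 ≤ T) : min 1 T⁻¹ * (T + 1) ≤ 2 := by
  rcases le_total T 1 with hle | hge
  · calc min 1 T⁻¹ * (T + 1) ≤ 1 * (T + 1) := by gcongr; exact min_le_left _ _
      _ ≤ 2 := by linarith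
  · calc min 1 T⁻¹ * (T + 1) ≤ T⁻¹ * (T + 1) := by gcongr; exact min_le_right _ _
      _ = 1 + T⁻¹ := by field_simp
      _ ≤ 2 := by linarith [inv_le_one_of_one_le₀ hge]

/-- For any `M ∈ SL(2,ℂ)` and `v ∈ ℂ²`,
`max (‖Mv‖, ‖M²v‖) ≥ (1/2) * min (1, 1/|Tr M|) * ‖v‖`, where when `Tr M = 0` the
quantity `1/|Tr M|` is interpreted as `+∞`, so that `min (1, 1/|Tr M|) = 1`. -/
theorem sl2_two_block_gordon (M : Matrix (Fin 2) (Fin 2) ℂ) (hM : M.det = 1)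
    (v : Fin 2 → ℂ) :
    (1 / 2) * min 1 (if M.trace = 0 then 1 else ‖M.trace‖⁻¹) * vnorm v ≤
      max (vnorm (M.mulVec v)) (vnorm ((M * M).mulVec v)) := by
  set m := max (vnorm (M.mulVec v)) (vnorm ((M * M).mulVec v))
  have hsq : (M * M).mulVec v = M.trace • M.mulVec v - v := by
    rw [Matrix.mul_self_eq_trace_smul_sub_one_of_det_eq_one hM, Matrix.sub_mulVec,
      Matrix.smul_mulVec, Matrix.one_mulVec]
  have hv : vnorm v ≤ (‖M.trace‖ + 1) * m :=
    norm_le_add_one_mul_max_of_eq_smul_sub M.trace (by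
      simp only [WithLp.equiv_symm_apply, hsq, WithLp.toLp_sub, WithLp.toLp_smul])
  have hc : min 1 (if M.trace = 0 then 1 else ‖M.trace‖⁻¹) * (‖M.trace‖ + 1) ≤ 2 := by
    split_ifs with ht
    · norm_num [ht]
    · exact min_one_inv_mul_add_one_le_two (norm_nonneg _)
  have hc0 : 0 ≤ min 1 (if M.trace = 0 then 1 else ‖M.trace‖⁻¹) := by
    split_ifs <;> positivity
  set c := min 1 (if M.trace = 0 then 1 else ‖M.trace‖⁻¹)
  have hm0 : 0 ≤ m := le_max_of_le_left (norm_nonneg _)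
  calc (1 / 2) * c * vnorm v ≤ (1 / 2) * c * ((‖M.trace‖ + 1) * m) := by gcongr
    _ = (1 / 2) * (c * (‖M.trace‖ + 1)) * m := by ring
    _ ≤ (1 / 2) * 2 * m := by gcongr
    _ = m := by ring
end

section
/- Suppose A, B ∈ SU(1,1) are elliptic (trace in (−2,2)) and AB ≠ BA. Then the semigroup generated by A and B (all finite products of A's and B's with positive exponents) contains a hyperbolic element, i.e. an element whose trace lies in ℝ ∖ [−2,2]. -/
open Matrix

/-- The signature matrix `j = diag(−1, 1)`. -/
def jm : Matrix (Fin 2) (Fin 2) ℂ := !![-1, 0; 0, 1]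

/-- Membership in `SU(1,1)`: determinant one and `A* j A = j`. -/
def SU11 (A : Matrix (Fin 2) (Fin 2) ℂ) : Prop := A.det = 1 ∧ Aᴴ * jm * A = jm

/-!
The eigenvalues of an elliptic `A` lie on the unit circle, so the powers of `A` accumulate at `1`
and `A⁻¹ = adj A` lies in the closure of the semigroup; hence so does the commutator
`A⁻¹ B A B⁻¹`, whose trace is `2 - det (A B - B A)`. The matrix `A B - B A` is a nonzero element of
the Lie algebra `su(1,1)` (a Minkowski space with quadratic form `det`) that is orthogonal, for the
trace form, to the timelike vector `A - (tr A / 2) • 1`; so it is spacelike, `det (A B - B A) < 0`,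
and the commutator is hyperbolic. Hyperbolicity is an open condition, so some product of `A`s and
`B`s is hyperbolic too.
-/

open Complex ComplexConjugate Filter Set Topology

theorem Subsemigroup.pow_succ_mem {M : Type*} [Monoid M] {S : Subsemigroup M} {x : M}
    (hx : x ∈ S) (n : ℕ) : x ^ (n + 1) ∈ S := by
  induction n with
  | zero => simpa using hx
  | succ n ih => rw [pow_succ]; exact S.mul_mem ih hx

theorem Subsemigroup.mem_topologicalClosure_of_mul_eq_one {M : Type*} [Monoid M]
    [TopologicalSpace M] [ContinuousMul M] {S : Subsemigroup M} {x y : M} (hx : x ∈ S)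
    (hxy : x * y = 1) (h : MapClusterPt 1 atTop (x ^ · : ℕ → M)) : y ∈ S.topologicalClosure := by
  -- `x ^ (n + 1) * y = x ^ n`, and these accumulate at `1 * y`.
  have hy := h.continuousAt_comp (continuous_mul_const y).continuousAt
  rw [one_mul] at hy
  refine S.isClosed_topologicalClosure.mem_of_mapClusterPt hy
    (eventually_atTop.2 ⟨2, fun n hn ↦ ?_⟩)
  obtain ⟨k, rfl⟩ : ∃ k, n = k + 2 := ⟨n - 2, by omega⟩
  show x ^ (k + 1 + 1) * y ∈ _
  rw [pow_succ, mul_assoc, hxy, mul_one]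
  exact S.le_topologicalClosure (S.pow_succ_mem hx k)

namespace Matrix

theorem sq_eq_trace_smul_sub_det_smul {R : Type*} [CommRing R]
    (M : Matrix (Fin 2) (Fin 2) R) : M ^ 2 = M.trace • M - M.det • 1 := by
  ext i j
  fin_cases i <;> fin_cases j <;>
    simp [sq, mul_apply, Fin.sum_univ_two, trace_fin_two, det_fin_two] <;> ring

theorem smul_pow_eq_of_trace_det {R : Type*} [CommRing R]
    (M : Matrix (Fin 2) (Fin 2) R) {l m : R} (htr : M.trace = l + m) (hdet : M.det = l * m)
    (n : ℕ) : (l - m) • M ^ n = (l ^ n - m ^ n) • M + (l * m ^ n - m * l ^ n) • 1 := by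
  induction n with
  | zero => simp [sub_smul]
  | succ n ih =>
    calc (l - m) • M ^ (n + 1) = ((l - m) • M ^ n) * M := by rw [pow_succ, smul_mul_assoc]
      _ = (l ^ n - m ^ n) • M ^ 2 + (l * m ^ n - m * l ^ n) • M := by
        rw [ih, add_mul, smul_mul_assoc, smul_mul_assoc, one_mul, sq]
      _ = _ := by
        rw [sq_eq_trace_smul_sub_det_smul, htr, hdet]
        module

theorem trace_adjugate_mul_mul_mul_adjugate {R : Type*} [CommRing R]
    (A B : Matrix (Fin 2) (Fin 2) R) :
    (adjugate A * B * A * adjugate B).trace = 2 * A.det * B.det - (A * B - B * A).det := by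
  simp only [adjugate_fin_two, trace_fin_two, det_fin_two, mul_apply, Fin.sum_univ_two,
    Matrix.sub_apply, of_apply, cons_val', cons_val_zero, cons_val_fin_one, cons_val_one]
  ring

theorem mapClusterPt_one_atTop_pow_of_trace_eq_two_cos (M : Matrix (Fin 2) (Fin 2) ℂ)
    {θ : ℝ} (hdet : M.det = 1) (htr : M.trace = 2 * Real.cos θ) (hθ : Real.sin θ ≠ 0) :
    MapClusterPt 1 atTop (M ^ · : ℕ → Matrix (Fin 2) (Fin 2) ℂ) := by
  set l := exp (θ * I)
  have hl : l ≠ 0 := exp_ne_zero _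
  have hl_inv : exp (-θ * I) = l⁻¹ := by rw [neg_mul, Complex.exp_neg]
  have hsub : l - l⁻¹ ≠ 0 := by
    intro h
    have h2 : (2 * Real.sin θ : ℂ) = 0 := by
      push_cast
      rw [two_sin, hl_inv, ← neg_sub, h, neg_zero, zero_mul]
    exact hθ (by exact_mod_cast (mul_eq_zero.1 h2).resolve_left two_ne_zero)
  have hpow := M.smul_pow_eq_of_trace_det (l := l) (m := l⁻¹)
    (by rw [htr]; push_cast; rw [two_cos, hl_inv]) (by rw [hdet, mul_inv_cancel₀ hl])
  set Φ : ℂ → Matrix (Fin 2) (Fin 2) ℂ :=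
    fun z ↦ (l - l⁻¹)⁻¹ • ((z - z⁻¹) • M + (l * z⁻¹ - l⁻¹ * z) • 1)
  have hΦ_pow : ∀ n : ℕ, Φ (l ^ n) = M ^ n := fun n ↦ by
    rw [← inv_smul_smul₀ hsub (M ^ n), hpow, inv_pow]
  have hΦ_one : Φ 1 = 1 := by simp [Φ, hsub]
  have hΦ_cont : ContinuousAt Φ 1 := by fun_prop (disch := exact one_ne_zero)
  -- `l` is `Circle.exp θ` viewed in `ℂ`, and the circle is a compact group.
  have hl_pow : MapClusterPt 1 atTop (l ^ · : ℕ → ℂ) :=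
    (mapClusterPt_one_atTop_pow (Circle.exp θ)).continuousAt_comp
      continuous_subtype_val.continuousAt
  simpa [hΦ_one, Function.comp_def, hΦ_pow] using hl_pow.continuousAt_comp hΦ_cont

theorem mapClusterPt_one_atTop_pow_of_trace_mem_Ioo (M : Matrix (Fin 2) (Fin 2) ℂ)
    (hdet : M.det = 1) (him : M.trace.im = 0) (hre : M.trace.re ∈ Ioo (-2) 2) :
    MapClusterPt 1 atTop (M ^ · : ℕ → Matrix (Fin 2) (Fin 2) ℂ) := by
  obtain ⟨hlo, hhi⟩ := hre
  refine M.mapClusterPt_one_atTop_pow_of_trace_eq_two_cos hdet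
    (θ := Real.arccos (M.trace.re / 2)) ?_ ?_
  · rw [Real.cos_arccos (by linarith) (by linarith), ofReal_div, ofReal_ofNat,
      mul_div_cancel₀ _ two_ne_zero]
    exact Complex.ext (by simp) (by simp [him])
  · rw [Real.sin_arccos]
    exact (Real.sqrt_pos.2 (by nlinarith)).ne'

end Matrix

/-- In `ℝ × ℂ` with the Minkowski form `p ^ 2 - normSq q`, the orthogonal complement of a timelike
vector `(p, q)` consists of spacelike vectors. -/
theorem sq_lt_normSq_of_mul_eq_re_mul_conj {p r : ℝ} {q s : ℂ} (hq : normSq q < p ^ 2)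
    (h : p * r = (q * conj s).re) (hrs : r ≠ 0 ∨ s ≠ 0) : r ^ 2 < normSq s := by
  have hcs : (p * r) ^ 2 ≤ normSq q * normSq s := by
    rw [h, ← normSq_conj s, ← normSq_mul]
    exact (sq _).trans_le (re_sq_le_normSq _)
  rcases eq_or_ne s 0 with rfl | hs
  · have hp : p ≠ 0 := by rintro rfl; linarith [normSq_nonneg q]
    simp only [map_zero, mul_zero, zero_re, mul_eq_zero] at h
    exact absurd (h.resolve_left hp) (hrs.resolve_right (not_not.2 rfl))
  · nlinarith [normSq_pos.2 hs, normSq_nonneg q, sq_nonneg r]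

namespace SU11

variable {A B : Matrix (Fin 2) (Fin 2) ℂ}

theorem mul (hA : SU11 A) (hB : SU11 B) : SU11 (A * B) := by
  refine ⟨by rw [det_mul, hA.1, hB.1, one_mul], ?_⟩
  rw [conjTranspose_mul, show Bᴴ * Aᴴ * jm * (A * B) = Bᴴ * (Aᴴ * jm * A) * B by noncomm_ring,
    hA.2, hB.2]

def subsemigroup : Subsemigroup (Matrix (Fin 2) (Fin 2) ℂ) where
  carrier := {A | SU11 A}
  mul_mem' := mul

theorem adjugate_eq (hA : SU11 A) : adjugate A = jm * Aᴴ * jm := by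
  have hjm : jm * jm = 1 := by simp [jm, one_fin_two]
  calc adjugate A = jm * (Aᴴ * jm * A) * adjugate A := by rw [hA.2, hjm, one_mul]
    _ = jm * Aᴴ * jm * (A * adjugate A) := by noncomm_ring
    _ = jm * Aᴴ * jm := by rw [mul_adjugate, hA.1, one_smul, mul_one]

theorem apply_one_one (hA : SU11 A) : A 1 1 = conj (A 0 0) := by
  simpa [adjugate_fin_two, jm, mul_apply, Fin.sum_univ_two, vecMul, dotProduct] using
    congrFun (congrFun hA.adjugate_eq 0) 0

theorem apply_one_zero (hA : SU11 A) : A 1 0 = conj (A 0 1) := by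
  simpa [adjugate_fin_two, jm, mul_apply, Fin.sum_univ_two, vecMul, dotProduct] using
    congrFun (congrFun hA.adjugate_eq 1) 0

theorem normSq_sub_normSq (hA : SU11 A) : normSq (A 0 0) - normSq (A 0 1) = 1 := by
  have h := hA.1
  rw [det_fin_two, hA.apply_one_one, hA.apply_one_zero, mul_conj, mul_conj] at h
  exact_mod_cast h

theorem trace_eq (hA : SU11 A) : A.trace = 2 * (A 0 0).re := by
  rw [trace_fin_two, hA.apply_one_one, add_conj, ofReal_mul, ofReal_ofNat]

theorem trace_im (hA : SU11 A) : A.trace.im = 0 := by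
  simp [hA.trace_eq]

theorem adjugate_mem_topologicalClosure {S : Subsemigroup (Matrix (Fin 2) (Fin 2) ℂ)}
    (hA : SU11 A) (hA_ell : A.trace.re ∈ Ioo (-2) 2) (hAS : A ∈ S) :
    adjugate A ∈ S.topologicalClosure :=
  S.mem_topologicalClosure_of_mul_eq_one hAS (by rw [mul_adjugate, hA.1, one_smul])
    (A.mapClusterPt_one_atTop_pow_of_trace_mem_Ioo hA.1 hA.trace_im hA_ell)

/-- `C = A B - B A` has the shape `!![i v, t; conj t, -i v]` and `tr (A C) = 0`: in Minkowski
coordinates, `C = (v, t)` is orthogonal to the timelike `(Im A₀₀, A₀₁)`. -/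
theorem re_det_commutator_neg (hA : SU11 A) (hB : SU11 B)
    (hA_ell : A.trace.re ∈ Ioo (-2) 2) (hAB : A * B ≠ B * A) : (A * B - B * A).det.re < 0 := by
  set C := A * B - B * A with hC_def
  have hC11 : C 1 1 = conj (C 0 0) := by
    simp [C, (hA.mul hB).apply_one_one, (hB.mul hA).apply_one_one]
  have hC10 : C 1 0 = conj (C 0 1) := by
    simp [C, (hA.mul hB).apply_one_zero, (hB.mul hA).apply_one_zero]
  have hv : (C 0 0).re = 0 := by
    have h : C.trace = 0 := by simp [C, trace_mul_comm A B]
    rw [trace_fin_two, hC11, add_conj] at h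
    simpa using h
  have horth : (A 0 0).im * (C 0 0).im = (A 0 1 * conj (C 0 1)).re := by
    have h : (A * C).trace = 0 := by
      rw [hC_def, mul_sub, trace_sub, ← mul_assoc, trace_mul_comm (A * A), trace_mul_comm A,
        mul_assoc, sub_self]
    rw [trace_fin_two, mul_apply, mul_apply, Fin.sum_univ_two, Fin.sum_univ_two, hC11, hC10,
      hA.apply_one_one, hA.apply_one_zero] at h
    have := congrArg re h
    simp only [add_re, mul_re, conj_re, conj_im, zero_re, hv] at this
    simp only [mul_re, conj_re, conj_im]
    linarith
  have htimelike : normSq (A 0 1) < (A 0 0).im ^ 2 := by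
    have htr : A.trace.re = 2 * (A 0 0).re := by simp [hA.trace_eq]
    have := hA.normSq_sub_normSq
    rw [normSq_apply] at this
    nlinarith [hA_ell.1, hA_ell.2]
  have hC_ne : (C 0 0).im ≠ 0 ∨ C 0 1 ≠ 0 := by
    by_contra! h
    apply hAB
    have hv0 : C 0 0 = 0 := Complex.ext hv h.1
    rw [← sub_eq_zero, ← hC_def, eta_fin_two C, hC11, hC10, hv0, h.2, map_zero]
    exact (eta_fin_two 0).symm
  have hdet : C.det.re = (C 0 0).im ^ 2 - normSq (C 0 1) := by
    rw [det_fin_two, hC11, hC10, mul_conj, mul_conj, ← ofReal_sub, ofReal_re,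
      normSq_apply (C 0 0), hv]
    ring
  rw [hdet]
  linarith [sq_lt_normSq_of_mul_eq_re_mul_conj htimelike horth hC_ne]

end SU11

theorem su11_noncommuting_elliptic_semigroup_hyperbolic_general
    (A B : Matrix (Fin 2) (Fin 2) ℂ) (hA : SU11 A) (hB : SU11 B)
    (hAtr : A.trace.re ∈ Set.Ioo (-2 : ℝ) 2)
    (hBtr : B.trace.re ∈ Set.Ioo (-2 : ℝ) 2)
    (hcomm : A * B ≠ B * A) :
    ∃ C ∈ Subsemigroup.closure {A, B}, C.trace.im = 0 ∧ 2 < |C.trace.re| := by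
  set S := Subsemigroup.closure ({A, B} : Set (Matrix (Fin 2) (Fin 2) ℂ))
  have hAS : A ∈ S := Subsemigroup.subset_closure (by simp)
  have hBS : B ∈ S := Subsemigroup.subset_closure (by simp)
  have hS : S ≤ SU11.subsemigroup :=
    Subsemigroup.closure_le.2 (insert_subset_iff.2 ⟨hA, singleton_subset_iff.2 hB⟩)
  have hcommutator : adjugate A * B * A * adjugate B ∈ S.topologicalClosure :=
    mul_mem (mul_mem (mul_mem (hA.adjugate_mem_topologicalClosure hAtr hAS)
      (S.le_topologicalClosure hBS)) (S.le_topologicalClosure hAS))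
      (hB.adjugate_mem_topologicalClosure hBtr hBS)
  have htrace : 2 < (adjugate A * B * A * adjugate B).trace.re := by
    rw [trace_adjugate_mul_mul_mul_adjugate, hA.1, hB.1]
    simp only [mul_one, sub_re, re_ofNat]
    linarith [hA.re_det_commutator_neg hB hAtr hcomm]
  obtain ⟨C, hC, hCS⟩ := mem_closure_iff.1 hcommutator _
    (isOpen_lt continuous_const (continuous_re.comp continuous_id.matrix_trace)) htrace
  exact ⟨C, hCS, (hS hCS).trace_im, hC.trans_le (le_abs_self _)⟩

/-- If `A, B ∈ SU(1,1)` are elliptic (real trace in `(−2,2)`) and do not commute, then the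
semigroup generated by `A` and `B` contains a hyperbolic element, i.e. an element whose
trace is real with absolute value `> 2`. -/
theorem su11_noncommuting_elliptic_semigroup_hyperbolic
    (A B : Matrix (Fin 2) (Fin 2) ℂ) (hA : SU11 A) (hB : SU11 B)
    (hAim : A.trace.im = 0) (hAtr : A.trace.re ∈ Set.Ioo (-2 : ℝ) 2)
    (hBim : B.trace.im = 0) (hBtr : B.trace.re ∈ Set.Ioo (-2 : ℝ) 2)
    (hcomm : A * B ≠ B * A) :
    ∃ C ∈ Subsemigroup.closure {A, B}, C.trace.im = 0 ∧ 2 < |C.trace.re| :=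
  su11_noncommuting_elliptic_semigroup_hyperbolic_general A B hA hB hAtr hBtr hcomm
end

section
/- Suppose A, B ∈ SL(2,ℝ) are elliptic (trace in (−2,2)) and AB ≠ BA. Then the semigroup generated by A and B contains a hyperbolic element of SL(2,ℝ) (an element with |trace| > 2). -/
/-!
An elliptic `A ∈ SL(2,ℝ)` satisfies `A² - (tr A) A + 1 = 0` with no real root, so
`ℝ[A] ≅ ℂ` and `A` corresponds to a point of the unit circle. A compact subsemigroup of a
Hausdorff group is a subgroup, so `A⁻¹` is a limit of positive powers of `A`, and likewise for
`B`. Hence the commutator `A B A⁻¹ B⁻¹` lies in the closure of the semigroup, and its trace is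
`2 - det (A B - B A)`. Now `A B - B A` is a nonzero traceless matrix orthogonal to `A` for the
trace form, and `-det`, which has signature `(2,1)` on traceless matrices, is positive definite on
the orthogonal complement of an elliptic element. So the commutator has trace `> 2`, and since
`{C | 2 < |tr C|}` is open, it contains an element of the semigroup itself.
-/

open Matrix

section CompactSubsemigroup

variable {G : Type*} [Group G] [TopologicalSpace G] [ContinuousMul G] [T2Space G]

/- The idempotent provided by the Ellis–Numakura lemma must be `1`; then the closure of the
positive powers of `g` is stable under `g⁻¹ * ·`. -/
theorem Subsemigroup.inv_mem_of_isCompact {S : Subsemigroup G} (hS : IsCompact (S : Set G))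
    {g : G} (hg : g ∈ S) : g⁻¹ ∈ S := by
  set T := (closure {g}).topologicalClosure
  have hTS : T ≤ S :=
    topologicalClosure_minimal _ ((closure_singleton_le_iff_mem g S).2 hg) hS.isClosed
  have hgT : g ∈ T := le_topologicalClosure _ (subset_closure rfl)
  obtain ⟨e, heT, he⟩ := exists_idempotent_in_compact_subsemigroup continuous_mul_const
    (T : Set G) ⟨g, hgT⟩ (hS.of_isClosed_subset (closure {g}).isClosed_topologicalClosure hTS)
    fun _ hx _ hy ↦ T.mul_mem hx hy
  have hone : (1 : G) ∈ T := mul_eq_left.1 he ▸ heT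
  have hinv_mul : ∀ x ∈ T, g⁻¹ * x ∈ T := by
    refine fun x hx ↦ _root_.closure_minimal (fun y hy ↦ ?_)
      ((closure {g}).isClosed_topologicalClosure.preimage (continuous_const_mul g⁻¹)) hx
    induction hy using closure_induction with
    | mem y hy =>
      show g⁻¹ * y ∈ T
      rwa [Set.mem_singleton_iff.1 hy, inv_mul_cancel]
    | mul y z _ hz hy _ =>
      show g⁻¹ * (y * z) ∈ T
      exact mul_assoc g⁻¹ y z ▸ T.mul_mem hy (le_topologicalClosure _ hz)
  exact hTS (mul_one g⁻¹ ▸ hinv_mul 1 hone)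

theorem MonoidHom.map_inv_mem_closure_subsemigroupClosure [CompactSpace G] {M : Type*}
    [Monoid M] [TopologicalSpace M] (f : G →* M) (hf : Continuous f) (g : G) :
    f g⁻¹ ∈ closure (Subsemigroup.closure {f g} : Set M) := by
  have hg : g⁻¹ ∈ closure (Subsemigroup.closure {g} : Set G) :=
    Subsemigroup.inv_mem_of_isCompact (S := (Subsemigroup.closure {g}).topologicalClosure)
      isClosed_closure.isCompact (subset_closure (Subsemigroup.subset_closure rfl))
  have himage : f '' (Subsemigroup.closure {g} : Set G) = Subsemigroup.closure {f g} := by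
    simpa using congrArg SetLike.coe (MulHom.map_mclosure (f : G →ₙ* M) {g})
  exact himage ▸ image_closure_subset_closure_image hf ⟨_, hg, rfl⟩

end CompactSubsemigroup

namespace Matrix

section CommRing

variable {R : Type*} [CommRing R]

theorem mul_self_fin_two (A : Matrix (Fin 2) (Fin 2) R) : A * A = A.trace • A - A.det • 1 := by
  ext i j
  fin_cases i <;> fin_cases j <;> simp [mul_apply, trace_fin_two, det_fin_two] <;> ring

theorem trace_mul_mul_inv_mul_inv_fin_two {A B : Matrix (Fin 2) (Fin 2) R} (hA : A.det = 1)
    (hB : B.det = 1) : (A * B * A⁻¹ * B⁻¹).trace = 2 - (A * B - B * A).det := by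
  rw [inv_def, inv_def, hA, hB, Ring.inverse_one, one_smul, one_smul]
  simp only [adjugate_fin_two, trace_fin_two, det_fin_two, mul_apply, Fin.sum_univ_two, sub_apply,
    of_apply, cons_val', cons_val_zero, cons_val_one, empty_val', cons_val_fin_one]
  rw [det_fin_two] at hA hB
  linear_combination 2 * (B 0 0 * B 1 1 - B 0 1 * B 1 0) * hA + 2 * hB

end CommRing

section OrderedField

variable {K : Type*} [Field K] [LinearOrder K] [IsStrictOrderedRing K]

theorem det_neg_of_trace_eq_zero_of_trace_mul_eq_zero {A X : Matrix (Fin 2) (Fin 2) K}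
    (hA : A.trace ^ 2 < 4 * A.det) (hX : X.trace = 0) (hAX : (A * X).trace = 0) (hX0 : X ≠ 0) :
    X.det < 0 := by
  obtain ⟨a, b, c, d, rfl⟩ : ∃ a b c d, A = !![a, b; c, d] := ⟨_, _, _, _, eta_fin_two A⟩
  obtain ⟨u, v, w, x, rfl⟩ : ∃ u v w x, X = !![u, v; w, x] := ⟨_, _, _, _, eta_fin_two X⟩
  simp only [trace_fin_two_of, det_fin_two_of, mul_fin_two] at hA hX hAX ⊢
  obtain rfl : x = -u := by linear_combination hX
  have hdisc : 0 < 4 * (a * d - b * c) - (a + d) ^ 2 := by linarith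
  have hbc : b * c < 0 := by nlinarith [sq_nonneg (a - d)]
  have key : -4 * (b * c) * (u ^ 2 + v * w) =
      (4 * (a * d - b * c) - (a + d) ^ 2) * u ^ 2 + (c * v - b * w) ^ 2 := by
    linear_combination ((a - d) * u - c * v - b * w) * hAX
  refine lt_of_not_ge fun hdet ↦ hX0 ?_
  have hsum : (4 * (a * d - b * c) - (a + d) ^ 2) * u ^ 2 + (c * v - b * w) ^ 2 ≤ 0 :=
    key ▸ mul_nonpos_of_nonneg_of_nonpos (by linarith) (by linarith)
  have hu : u = 0 := by
    have : (4 * (a * d - b * c) - (a + d) ^ 2) * u ^ 2 = 0 :=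
      le_antisymm (by nlinarith [sq_nonneg (c * v - b * w)]) (by positivity)
    simpa [hdisc.ne'] using this
  subst hu
  have hcvbw : c * v - b * w = 0 :=
    pow_eq_zero_iff two_ne_zero |>.1 <| le_antisymm (by linarith) (sq_nonneg _)
  have hv : v = 0 := (mul_eq_zero.1 (by linear_combination (hcvbw + hAX) / 2 : c * v = 0))
    |>.resolve_left (right_ne_zero_of_mul hbc.ne)
  have hw : w = 0 := (mul_eq_zero.1 (by linear_combination (hAX - hcvbw) / 2 : b * w = 0))
    |>.resolve_left (left_ne_zero_of_mul hbc.ne)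
  ext i j
  fin_cases i <;> fin_cases j <;> simp [hv, hw]

theorem det_mul_sub_mul_neg {A B : Matrix (Fin 2) (Fin 2) K} (hA : A.trace ^ 2 < 4 * A.det)
    (hAB : A * B ≠ B * A) : (A * B - B * A).det < 0 :=
  det_neg_of_trace_eq_zero_of_trace_mul_eq_zero hA (by rw [trace_sub, trace_mul_comm, sub_self])
    (by rw [mul_sub, trace_sub, ← Matrix.mul_assoc, ← Matrix.mul_assoc, trace_mul_cycle A B A,
      sub_self])
    (sub_ne_zero.2 hAB)

end OrderedField

/- `J = (A - (t/2)) / s` with `s = √(1 - (t/2)²)` squares to `-1`, and `A` is the image of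
`t/2 + s i`. -/
theorem exists_algHom_complex_apply_circle_eq {A : Matrix (Fin 2) (Fin 2) ℝ} (hA : A.det = 1)
    (htr : |A.trace| < 2) :
    ∃ (φ : ℂ →ₐ[ℝ] Matrix (Fin 2) (Fin 2) ℝ) (z : Circle), φ z = A := by
  set t := A.trace
  set s := √(1 - (t / 2) ^ 2)
  have hs : s ^ 2 = 1 - (t / 2) ^ 2 := Real.sq_sqrt (by nlinarith [sq_abs t, abs_nonneg t])
  have hs0 : s ≠ 0 := Real.sqrt_ne_zero'.2 (by nlinarith [sq_abs t, abs_nonneg t])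
  set J := s⁻¹ • (A - (t / 2) • 1)
  have hJ : J * J = -1 := by
    have hsq : (A - (t / 2) • 1) * (A - (t / 2) • 1) =
        -(s ^ 2) • (1 : Matrix (Fin 2) (Fin 2) ℝ) := by
      rw [hs]
      simp only [sub_mul, mul_sub, Matrix.smul_mul, Matrix.mul_smul, Matrix.one_mul,
        Matrix.mul_one, smul_smul, mul_self_fin_two, hA]
      module
    rw [smul_mul_smul, hsq, smul_smul]
    field_simp
    simp
  refine ⟨Complex.liftAux J hJ, Circle.exp (Real.arccos (t / 2)), ?_⟩
  rw [Complex.liftAux_apply, Circle.coe_exp, Complex.exp_ofReal_mul_I_re,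
    Complex.exp_ofReal_mul_I_im, Real.cos_arccos, Real.sin_arccos, smul_smul,
    mul_inv_cancel₀ hs0, one_smul, Algebra.algebraMap_eq_smul_one, add_sub_cancel]
  all_goals linarith [abs_lt.1 htr]

theorem inv_mem_closure_subsemigroupClosure {A : Matrix (Fin 2) (Fin 2) ℝ} (hA : A.det = 1)
    (htr : |A.trace| < 2) :
    A⁻¹ ∈ closure (Subsemigroup.closure {A} : Set (Matrix (Fin 2) (Fin 2) ℝ)) := by
  obtain ⟨φ, z, rfl⟩ := exists_algHom_complex_apply_circle_eq hA htr
  let f : Circle →* Matrix (Fin 2) (Fin 2) ℝ :=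
    (φ : ℂ →* Matrix (Fin 2) (Fin 2) ℝ).comp Circle.coeHom
  have hf : Continuous f :=
    φ.toLinearMap.continuous_of_finiteDimensional.comp continuous_subtype_val
  have hinv : f z⁻¹ = (φ z)⁻¹ :=
    (inv_eq_left_inv (show f z⁻¹ * f z = 1 by rw [← map_mul, inv_mul_cancel, map_one])).symm
  exact hinv ▸ f.map_inv_mem_closure_subsemigroupClosure hf z

end Matrix

/-- If `A, B ∈ SL(2,ℝ)` are elliptic (trace in `(−2,2)`) and do not commute, then the
semigroup generated by `A` and `B` contains a hyperbolic element of `SL(2,ℝ)`,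
i.e. an element whose trace has absolute value `> 2`. -/
theorem sl2r_noncommuting_elliptic_semigroup_hyperbolic
    (A B : Matrix (Fin 2) (Fin 2) ℝ) (hA : A.det = 1) (hB : B.det = 1)
    (hAtr : A.trace ∈ Set.Ioo (-2 : ℝ) 2) (hBtr : B.trace ∈ Set.Ioo (-2 : ℝ) 2)
    (hcomm : A * B ≠ B * A) :
    ∃ C ∈ Subsemigroup.closure {A, B}, 2 < |C.trace| := by
  set S := Subsemigroup.closure {A, B}
  have hAS : A ∈ S := Subsemigroup.subset_closure (by simp)
  have hBS : B ∈ S := Subsemigroup.subset_closure (by simp)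
  have hA_inv : A⁻¹ ∈ S.topologicalClosure :=
    closure_mono (Subsemigroup.closure_mono (by simp))
      (inv_mem_closure_subsemigroupClosure hA (abs_lt.2 hAtr))
  have hB_inv : B⁻¹ ∈ S.topologicalClosure :=
    closure_mono (Subsemigroup.closure_mono (by simp))
      (inv_mem_closure_subsemigroupClosure hB (abs_lt.2 hBtr))
  have hcommutator : A * B * A⁻¹ * B⁻¹ ∈ S.topologicalClosure :=
    mul_mem (mul_mem (S.le_topologicalClosure (mul_mem hAS hBS)) hA_inv) hB_inv
  have htrace : 2 < (A * B * A⁻¹ * B⁻¹).trace := by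
    have hA_elliptic : A.trace ^ 2 < 4 * A.det := by rw [hA]; nlinarith [hAtr.1, hAtr.2]
    rw [trace_mul_mul_inv_mul_inv_fin_two hA hB]
    linarith [det_mul_sub_mul_neg hA_elliptic hcomm]
  obtain ⟨C, hC_hyperbolic, hCS⟩ := mem_closure_iff.1 hcommutator {C | 2 < |C.trace|}
    (isOpen_lt continuous_const continuous_id.matrix_trace.abs) (htrace.trans_le (le_abs_self _))
  exact ⟨C, hCS, hC_hyperbolic⟩
end

section
/- Let G denote the set of Gordon-type elements of the space LP(ℝ,ℂ) of uniformly limit-periodic continuous functions ℝ → ℂ, i.e. functions φ for which there exist q_k → ∞ with C^{q_k} · sup_{0 ≤ x < q_k} |φ(x ± q_k) − φ(x)| → 0 for every C > 0. Then G is a dense G_δ subset of LP(ℝ,ℂ) (with the uniform metric). -/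
open Filter BoundedContinuousFunction

def LPspace : Set (ℝ →ᵇ ℂ) := closure {f : ℝ →ᵇ ℂ | ∃ T > (0 : ℝ), ∀ x, f (x + T) = f x}

def GordonType (f : ℝ →ᵇ ℂ) : Prop :=
  ∃ q : ℕ → ℝ, (∀ k, 0 < q k) ∧ Tendsto q atTop atTop ∧
    ∀ C > (0 : ℝ), Tendsto
      (fun k => C ^ (q k) * ⨆ x : Set.Ico (0 : ℝ) (q k),
          max ‖f ((x : ℝ) + q k) - f (x : ℝ)‖
              ‖f ((x : ℝ) - q k) - f (x : ℝ)‖)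
      atTop (nhds 0)

/-! For each `N`, the functions whose defect `gordonDefect f q` at some `q > N + 1` is below
`(N + 1)⁻¹ (N + 1)^(-q)` form an open set, since the defect is `2`-Lipschitz in `f`, and this set
contains every periodic function, whose defect vanishes at multiples of its period; it is therefore
dense in `LP`. Gordon-type functions are exactly the intersection of these sets over `N`: pick
`q_N` from the `N`-th set, and for a fixed `C` use `C ≤ N + 1` for large `N`. Since `LP` is closed
in a complete space, Baire's theorem applies. -/

section Defect

variable {E : Type*} [SeminormedAddCommGroup E]

noncomputable def gordonDefect (f : ℝ →ᵇ E) (q : ℝ) : ℝ :=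
  ⨆ x : Set.Ico (0 : ℝ) q, max ‖f (x + q) - f x‖ ‖f (x - q) - f x‖

lemma gordonDefect_nonneg (f : ℝ →ᵇ E) (q : ℝ) : 0 ≤ gordonDefect f q :=
  Real.iSup_nonneg fun _ => le_max_of_le_left (norm_nonneg _)

lemma bddAbove_range_gordonDefect (f : ℝ →ᵇ E) (q : ℝ) :
    BddAbove (Set.range fun x : Set.Ico (0 : ℝ) q =>
      max ‖f (x + q) - f x‖ ‖f (x - q) - f x‖) := by
  refine ⟨2 * ‖f‖, ?_⟩
  rintro _ ⟨x, rfl⟩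
  simp only [← dist_eq_norm]
  exact max_le (f.dist_le_two_norm _ _) (f.dist_le_two_norm _ _)

lemma gordonDefect_eq_zero_of_periodic {f : ℝ →ᵇ E} {q : ℝ} (hf : Function.Periodic f q) :
    gordonDefect f q = 0 := by
  refine le_antisymm (Real.iSup_le (fun x => ?_) le_rfl) (gordonDefect_nonneg f q)
  simp [hf x, hf.sub_eq x]

lemma norm_sub_le_norm_sub_add_two_mul_dist (f g : ℝ →ᵇ E) (a b : ℝ) :
    ‖g a - g b‖ ≤ ‖f a - f b‖ + 2 * dist g f := by
  simp only [← dist_eq_norm]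
  calc dist (g a) (g b) ≤ dist (g a) (f a) + dist (f a) (f b) + dist (f b) (g b) :=
        dist_triangle4 _ _ _ _
    _ ≤ dist g f + dist (f a) (f b) + dist f g := by
        gcongr <;> exact dist_coe_le_dist _
    _ = dist (f a) (f b) + 2 * dist g f := by rw [dist_comm f g]; ring

lemma gordonDefect_le_add_two_mul_dist (f g : ℝ →ᵇ E) (q : ℝ) :
    gordonDefect g q ≤ gordonDefect f q + 2 * dist g f := by
  refine Real.iSup_le (fun x => ?_) (by positivity [gordonDefect_nonneg f q])
  obtain ⟨hx₁, hx₂⟩ : _ ≤ gordonDefect f q ∧ _ ≤ gordonDefect f q :=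
    max_le_iff.1 (le_ciSup (bddAbove_range_gordonDefect f q) x)
  exact max_le ((norm_sub_le_norm_sub_add_two_mul_dist f g _ _).trans (by gcongr))
    ((norm_sub_le_norm_sub_add_two_mul_dist f g _ _).trans (by gcongr))

lemma lipschitzWith_gordonDefect (q : ℝ) : LipschitzWith 2 (gordonDefect (E := E) · q) :=
  LipschitzWith.of_le_add_mul 2 fun g f => by
    simpa using gordonDefect_le_add_two_mul_dist f g q

def gordonApprox (N : ℕ) : Set (ℝ →ᵇ E) :=
  ⋃ q > (N : ℝ) + 1, {f | ((N : ℝ) + 1) ^ q * gordonDefect f q < 1 / ((N : ℝ) + 1)}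

lemma mem_gordonApprox_iff {f : ℝ →ᵇ E} {N : ℕ} : f ∈ gordonApprox N ↔
    ∃ q > (N : ℝ) + 1, ((N : ℝ) + 1) ^ q * gordonDefect f q < 1 / ((N : ℝ) + 1) := by
  simp [gordonApprox]

lemma isOpen_gordonApprox (N : ℕ) : IsOpen (gordonApprox (E := E) N) :=
  isOpen_biUnion fun q _ => isOpen_lt
    (continuous_const.mul (lipschitzWith_gordonDefect q).continuous) continuous_const

lemma mem_gordonApprox_of_periodic {f : ℝ →ᵇ E} {T : ℝ} (hf : Function.Periodic f T)
    (hT : 0 < T) (N : ℕ) : f ∈ gordonApprox N := by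
  obtain ⟨n, hn⟩ := exists_nat_gt (((N : ℝ) + 1) / T)
  refine mem_gordonApprox_iff.2 ⟨n * T, (div_lt_iff₀ hT).1 hn, ?_⟩
  rw [gordonDefect_eq_zero_of_periodic (hf.nat_mul n), mul_zero]
  positivity

end Defect

lemma dense_preimage_val_closure_of_subset {X : Type*} [TopologicalSpace X] {s U : Set X}
    (hs : s ⊆ U) : Dense (Subtype.val ⁻¹' U : Set (closure s)) := by
  rw [Subtype.dense_iff, Subtype.image_preimage_coe]
  exact closure_mono (Set.subset_inter subset_closure hs)

lemma gordonType_iff_forall_mem_gordonApprox (f : ℝ →ᵇ ℂ) :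
    GordonType f ↔ ∀ N, f ∈ gordonApprox N := by
  simp only [mem_gordonApprox_iff]
  constructor
  · rintro ⟨q, -, hq_top, hq⟩ N
    have hsmall : ∀ᶠ k in atTop,
        ((N : ℝ) + 1) ^ q k * gordonDefect f (q k) < 1 / ((N : ℝ) + 1) :=
      (hq _ N.cast_add_one_pos).eventually_lt_const (by positivity)
    obtain ⟨k, hk_small, hk_large⟩ := (hsmall.and (hq_top.eventually_gt_atTop _)).exists
    exact ⟨q k, hk_large, hk_small⟩
  · intro h
    choose q hq_large hq_small using h
    have hq_pos : ∀ N, 0 < q N := fun N => (N.cast_add_one_pos).trans (hq_large N)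
    refine ⟨q, hq_pos, tendsto_atTop_mono (fun N => (hq_large N).le)
      (tendsto_atTop_add_const_right _ 1 tendsto_natCast_atTop_atTop), fun C hC => ?_⟩
    refine squeeze_zero' (Eventually.of_forall fun N => by positivity [gordonDefect_nonneg f (q N)])
      ?_ tendsto_one_div_add_atTop_nhds_zero_nat
    filter_upwards [eventually_ge_atTop ⌈C⌉₊] with N hN
    have hC_le : C ≤ (N : ℝ) + 1 := (Nat.le_ceil C).trans (by exact_mod_cast hN.trans N.le_succ)
    calc C ^ q N * gordonDefect f (q N)
        ≤ ((N : ℝ) + 1) ^ q N * gordonDefect f (q N) := by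
          gcongr
          exacts [gordonDefect_nonneg f _, (hq_pos N).le]
      _ ≤ 1 / ((N : ℝ) + 1) := (hq_small N).le

/-- The set of Gordon-type elements of `LP(ℝ,ℂ)` is a dense `G_δ` subset of `LP(ℝ,ℂ)`
(with the uniform metric, i.e. the subspace topology). -/
theorem gordonType_dense_Gdelta :
    IsGδ {f : LPspace | GordonType (f : ℝ →ᵇ ℂ)} ∧
    Dense {f : LPspace | GordonType (f : ℝ →ᵇ ℂ)} := by
  have : CompleteSpace LPspace := isClosed_closure.completeSpace_coe
  have hopen (N : ℕ) : IsOpen (Subtype.val ⁻¹' gordonApprox N : Set LPspace) :=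
    (isOpen_gordonApprox N).preimage continuous_subtype_val
  have hdense (N : ℕ) : Dense (Subtype.val ⁻¹' gordonApprox N : Set LPspace) :=
    dense_preimage_val_closure_of_subset fun _ ⟨T, hT, hf⟩ =>
      mem_gordonApprox_of_periodic hf hT N
  have hG : {f : LPspace | GordonType (f : ℝ →ᵇ ℂ)} =
      ⋂ N, Subtype.val ⁻¹' gordonApprox N := by
    ext f
    simp [gordonType_iff_forall_mem_gordonApprox]
  rw [hG]
  exact ⟨.iInter fun N => (hopen N).isGδ, dense_iInter_of_isOpen hopen hdense⟩
end
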